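/- Let p be a prime, D cyclic of order p^n, E ≤ Aut(D) a p'-subgroup, G = D ⋊ E, and let i, j ∈ {0,...,n} with α ∈ Aut(D_i), β ∈ Aut(D_j). Then the twisted diagonal subgroups Δ(D_i,α,D_i) and Δ(D_j,β,D_j) of G×G are conjugate in G×G if and only if i = j and there exists ρ ∈ E with α = β ∘ ρ|_{D_i}. -/

import Mathlib

/-!
As `D` is abelian, conjugating `(inl a, inl b)` by `z ∈ G × G` just applies the automorphisms
`ρ₁, ρ₂ ∈ E` given by the `E`-components of `z`. So the conjugate of `Δ(D_i, α, D_i)` is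
`{(ρ₁ (α x), ρ₂ x)}`, and it equals `Δ(D_j, β, D_j)` iff `ρ₂` maps `D_i` onto `D_j` and
`ρ₁ ∘ α = β ∘ ρ₂`. Every endomorphism of the cyclic group `D` is a power map, so `ρ₁` preserves
`D_j` and commutes with `β`, and the condition becomes `α = β ∘ ρ₁⁻¹ρ₂`. Conversely, such a `ρ`
is realised by conjugation with `(1, ρ)`, as subgroups of a finite cyclic group are determined
by their order.
-/

open SemidirectProduct

namespace IsCyclic

variable {D : Type*} [Group D] [IsCyclic D]

theorem apply_mem_of_mem (f : D →* D) {H : Subgroup D} {x : D} (hx : x ∈ H) : f x ∈ H := by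
  obtain ⟨m, hm⟩ := f.map_cyclic
  exact hm x ▸ zpow_mem hx m

theorem map_eq_self (σ : D ≃* D) (H : Subgroup D) : H.map (σ : D →* D) = H := by
  refine le_antisymm ?_ fun x hx => ⟨σ.symm x, apply_mem_of_mem (σ.symm : D →* D) hx, by simp⟩
  rintro _ ⟨x, hx, rfl⟩
  exact apply_mem_of_mem _ hx

theorem apply_comm_subgroupHom (f : D →* D) {K : Subgroup D} (β : K →* K) (y : K)
    (hy : f y ∈ K) :
    f (β y) = β ⟨f y, hy⟩ := by
  obtain ⟨m, hm⟩ := f.map_cyclic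
  have hy' : (⟨f y, hy⟩ : K) = y ^ m := Subtype.ext (hm y)
  rw [hm, hy', map_zpow, Subgroup.coe_zpow]

theorem coe_eq_setOf_pow_card_eq_one [Finite D] (H : Subgroup D) :
    (H : Set D) = {x | x ^ Nat.card H = 1} := by
  classical
  have := Fintype.ofFinite D
  refine Set.eq_of_subset_of_ncard_le (fun x hx => ?_) ?_ (Set.toFinite _)
  · simpa only [Set.mem_ofPred_eq, Subgroup.coe_pow, Subgroup.coe_one] using
      congrArg Subtype.val (pow_card_eq_one' (G := H) (x := ⟨x, hx⟩))
  · rw [Set.ncard_eq_toFinset_card', Set.toFinset_ofPred, ← Nat.card_coe_set_eq]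
    exact card_pow_eq_one_le Nat.card_pos

theorem subgroup_eq_of_card_eq [Finite D] {H K : Subgroup D} (h : Nat.card H = Nat.card K) :
    H = K :=
  SetLike.coe_injective <| by rw [coe_eq_setOf_pow_card_eq_one, coe_eq_setOf_pow_card_eq_one, h]

end IsCyclic

namespace SemidirectProduct

variable {N G : Type*} [Group N] [Group G] {φ : G →* MulAut N}

theorem mul_inl_mul_inv [IsMulCommutative N] (g : N ⋊[φ] G) (n : N) :
    g * inl n * g⁻¹ = inl (φ g.right n) := by
  calc g * inl n * g⁻¹ = inl g.left * (inr g.right * inl n * inr g.right⁻¹) * (inl g.left)⁻¹ := by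
        conv_lhs => rw [← inl_left_mul_inr_right g]
        simp only [mul_inv_rev, map_inv, mul_assoc]
    _ = inl (φ g.right n) := by
        rw [← inl_aut, ← map_inv, ← map_mul, ← map_mul, mul_comm' g.left, mul_inv_cancel_right]

theorem image_conj_prodMap_inl [IsMulCommutative N] (z : (N ⋊[φ] G) × (N ⋊[φ] G))
    (S : Set (N × N)) :
    (fun w => z * w * z⁻¹) '' (Prod.map inl inl '' S) =
      Prod.map inl inl '' (Prod.map (φ z.1.right) (φ z.2.right) '' S) := by
  simp only [Set.image_image]
  congr! 1 with w
  ext <;> simp [mul_inl_mul_inv]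

end SemidirectProduct

section TwistedDiagonal

variable {N : Type*} [Group N]

def twistedDiagonal (H : Subgroup N) (α : H → H) : Set (N × N) :=
  Set.range fun x : H => ((α x : N), (x : N))

theorem prodMap_image_twistedDiagonal_eq_iff (σ : N → N) (τ : N ≃* N) {H K : Subgroup N}
    (α : H → H) (β : K → K) :
    Prod.map σ τ '' twistedDiagonal H α = twistedDiagonal K β ↔
      H.map (τ : N →* N) = K ∧
        ∀ (x : N) (hx : x ∈ H) (hx' : τ x ∈ K), σ (α ⟨x, hx⟩) = β ⟨τ x, hx'⟩ := by
  constructor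
  · intro h
    have hmem (x : H) : ∃ y : K, (β y : N) = σ (α x) ∧ (y : N) = τ x := by
      obtain ⟨y, hy⟩ : (σ (α x), τ x) ∈ twistedDiagonal K β := h ▸ ⟨_, ⟨x, rfl⟩, rfl⟩
      exact ⟨y, Prod.ext_iff.1 hy⟩
    refine ⟨le_antisymm ?_ fun y hy => ?_, fun x hx hx' => ?_⟩
    · rintro _ ⟨x, hx, rfl⟩
      obtain ⟨y, -, hy⟩ := hmem ⟨x, hx⟩
      exact hy ▸ y.2
    · obtain ⟨_, ⟨x, rfl⟩, hx⟩ : ((β ⟨y, hy⟩ : N), y) ∈ Prod.map σ τ '' twistedDiagonal H α :=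
        h ▸ ⟨⟨y, hy⟩, rfl⟩
      exact ⟨x, x.2, (Prod.ext_iff.1 hx).2⟩
    · obtain ⟨y, hβ, hy⟩ := hmem ⟨x, hx⟩
      rw [← hβ, show y = ⟨τ x, hx'⟩ from Subtype.ext hy]
  · rintro ⟨hmap, hαβ⟩
    ext w
    constructor
    · rintro ⟨_, ⟨x, rfl⟩, rfl⟩
      have hx' : τ x ∈ K := hmap ▸ ⟨x, x.2, rfl⟩
      exact ⟨⟨τ x, hx'⟩, by simp [hαβ x x.2 hx']⟩
    · rintro ⟨y, rfl⟩
      obtain ⟨x, hx, hxy⟩ : (y : N) ∈ H.map (τ : N →* N) := hmap ▸ y.2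
      have hy : (⟨τ x, hxy ▸ y.2⟩ : K) = y := Subtype.ext hxy
      exact ⟨_, ⟨⟨x, hx⟩, rfl⟩, Prod.ext (by simp [hαβ x hx (hxy ▸ y.2), hy]) hxy⟩

end TwistedDiagonal

theorem stmt14_general (p : ℕ) (hp : p.Prime)
    (D : Type*) [Group D] [IsCyclic D] [Fintype D]
    (E : Subgroup (MulAut D))
    (i j : ℕ)
    (Di Dj : Subgroup D) (hDi : Nat.card Di = p ^ i) (hDj : Nat.card Dj = p ^ j)
    (α : Di ≃* Di) (β : Dj ≃* Dj) :
    (∃ z : (D ⋊[E.subtype] E) × (D ⋊[E.subtype] E),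
      (fun w => z * w * z⁻¹) ''
          {w : (D ⋊[E.subtype] E) × (D ⋊[E.subtype] E) |
            ∃ x : Di, w = (SemidirectProduct.inl ((α x : Di) : D),
                           SemidirectProduct.inl ((x : Di) : D))} =
        {w : (D ⋊[E.subtype] E) × (D ⋊[E.subtype] E) |
            ∃ x : Dj, w = (SemidirectProduct.inl ((β x : Dj) : D),
                           SemidirectProduct.inl ((x : Dj) : D))}) ↔
    (i = j ∧ ∃ ρ : MulAut D, ρ ∈ E ∧
      ∀ (x : D) (hx : x ∈ Di) (hx' : ρ x ∈ Dj),
        ((α ⟨x, hx⟩ : Di) : D) = ((β ⟨ρ x, hx'⟩ : Dj) : D)) := by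
  have : IsMulCommutative D := ⟨⟨IsCyclic.commGroup.mul_comm⟩⟩
  have hΔ (H : Subgroup D) (γ : H ≃* H) :
      {w : (D ⋊[E.subtype] E) × (D ⋊[E.subtype] E) |
        ∃ x : H, w = (inl (γ x : D), inl (x : D))} =
        Prod.map inl inl '' twistedDiagonal H γ := by
    ext w
    simp [twistedDiagonal, eq_comm]
  have hinj : Function.Injective
      (Prod.map (inl : D → D ⋊[E.subtype] E) (inl : D → D ⋊[E.subtype] E)) :=
    inl_injective.prodMap inl_injective
  simp_rw [hΔ, image_conj_prodMap_inl, (Set.image_injective.2 hinj).eq_iff,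
    prodMap_image_twistedDiagonal_eq_iff]
  constructor
  · rintro ⟨z, hmap, hαβ⟩
    set ρ₁ := E.subtype z.1.right
    set ρ₂ := E.subtype z.2.right
    have hij : i = j := Nat.pow_right_injective hp.two_le <| show p ^ i = p ^ j by
      rw [← hDi, ← hDj, ← hmap, Subgroup.card_map_of_injective ρ₂.injective]
    refine ⟨hij, ρ₁⁻¹ * ρ₂, mul_mem (inv_mem z.1.right.2) z.2.right.2, fun x hx hx' => ?_⟩
    have hρ₂x : ρ₂ x ∈ Dj := hmap ▸ ⟨x, hx, rfl⟩
    calc (α ⟨x, hx⟩ : D) = ρ₁⁻¹ (β ⟨ρ₂ x, hρ₂x⟩) := by rw [← hαβ x hx hρ₂x]; simp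
      _ = β ⟨(ρ₁⁻¹ * ρ₂) x, hx'⟩ :=
        IsCyclic.apply_comm_subgroupHom ((ρ₁⁻¹ : MulAut D) : D →* D) β.toMonoidHom
          ⟨ρ₂ x, hρ₂x⟩ hx'
  · rintro ⟨rfl, ρ, hρ, hαβ⟩
    obtain rfl : Di = Dj := IsCyclic.subgroup_eq_of_card_eq (hDi.trans hDj.symm)
    exact ⟨(1, inr ⟨ρ, hρ⟩), IsCyclic.map_eq_self ρ Di, by simpa using hαβ⟩

/-- Let `p` be prime, `D` cyclic of order `p^n`, `E ≤ Aut(D)` a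
`p'`-subgroup, `G = D ⋊ E`, `i, j ∈ {0,…,n}`, `α ∈ Aut(D_i)`, `β ∈ Aut(D_j)`.  The
twisted diagonal subgroups `Δ(D_i,α,D_i)` and `Δ(D_j,β,D_j)` of `G×G` are conjugate in
`G×G` iff `i = j` and `α = β ∘ ρ|_{D_i}` for some `ρ ∈ E`. -/
theorem stmt14 (p n : ℕ) (hp : p.Prime)
    (D : Type*) [Group D] [IsCyclic D] [Fintype D] (hD : Fintype.card D = p ^ n)
    (E : Subgroup (MulAut D)) (hE : Nat.Coprime (Nat.card E) p)
    (i j : ℕ) (hin : i ≤ n) (hjn : j ≤ n)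
    (Di Dj : Subgroup D) (hDi : Nat.card Di = p ^ i) (hDj : Nat.card Dj = p ^ j)
    (α : Di ≃* Di) (β : Dj ≃* Dj) :
    (∃ z : (D ⋊[E.subtype] E) × (D ⋊[E.subtype] E),
      (fun w => z * w * z⁻¹) ''
          {w : (D ⋊[E.subtype] E) × (D ⋊[E.subtype] E) |
            ∃ x : Di, w = (SemidirectProduct.inl ((α x : Di) : D),
                           SemidirectProduct.inl ((x : Di) : D))} =
        {w : (D ⋊[E.subtype] E) × (D ⋊[E.subtype] E) |
            ∃ x : Dj, w = (SemidirectProduct.inl ((β x : Dj) : D),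
                           SemidirectProduct.inl ((x : Dj) : D))}) ↔
    (i = j ∧ ∃ ρ : MulAut D, ρ ∈ E ∧
      ∀ (x : D) (hx : x ∈ Di) (hx' : ρ x ∈ Dj),
        ((α ⟨x, hx⟩ : Di) : D) = ((β ⟨ρ x, hx'⟩ : Dj) : D)) :=
  stmt14_general p hp D E i j Di Dj hDi hDj α β
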